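/- Let k be a finite field, r ∈ k, x ∈ F_k a word, and α, β ∈ k with α ≠ r. Set γ = (r² − (α − β)·r + 1 − α·β)·(r − α)⁻¹. Then the word αβx (α, then β, prepended to x) lies in A_r if and only if the word γx lies in A_r. -/

import Mathlib

/-!
Membership of `w` in `A_r` only depends on the line spanned by the second column of `π(w)`:
it must be the line through `(1, r)`. Since `π(α :: w) = [[0,1],[-1,α]] * π(w)`, prepending `α`
pulls the line through `(1, r)` back to the line through `(α - r, 1)`, and the line through
`(s, 1)`, for `s ≠ 0`, back to the line through `(β - s⁻¹, 1)` when prepending `β`. So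
`αβx ∈ A_r` and `γx ∈ A_r` ask the same of `π(x)`, because `γ - r = β - (α - r)⁻¹`.
-/

/-- The monoid homomorphism π sending a word α₁…α_l over k to the matrix product
[[0,1],[−1,α₁]] ⋯ [[0,1],[−1,α_l]]. -/
def piWord {k : Type*} [Field k] (w : List k) : Matrix (Fin 2) (Fin 2) k :=
  (w.map fun α => !![0, 1; -1, α]).prod

/-- A_r : words w with π(w) = [[a,b],[c,d]] satisfying d = b·r and b ≠ 0. -/
def Ar {k : Type*} [Field k] (r : k) : Set (List k) :=
  {w | piWord w 1 1 = piWord w 0 1 * r ∧ piWord w 0 1 ≠ 0}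

section

variable {k : Type*} [Field k]

/-- Words whose `π`-image has second column a nonzero multiple of `(s, 1)`; `A_r` is the
same condition for `(1, r)`. -/
def Br (s : k) : Set (List k) :=
  {w | piWord w 0 1 = s * piWord w 1 1 ∧ piWord w 1 1 ≠ 0}

lemma piWord_cons (α : k) (w : List k) :
    piWord (α :: w) = !![0, 1; -1, α] * piWord w := by
  simp [piWord]

lemma piWord_cons_zero_one (α : k) (w : List k) :
    piWord (α :: w) 0 1 = piWord w 1 1 := by
  simp [piWord_cons, Matrix.mul_apply, Fin.sum_univ_two]

lemma piWord_cons_one_one (α : k) (w : List k) :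
    piWord (α :: w) 1 1 = -piWord w 0 1 + α * piWord w 1 1 := by
  simp [piWord_cons, Matrix.mul_apply, Fin.sum_univ_two]

lemma cons_mem_Ar_iff (r α : k) (w : List k) : α :: w ∈ Ar r ↔ w ∈ Br (α - r) := by
  simp only [Ar, Br, Set.mem_ofPred_eq, piWord_cons_zero_one, piWord_cons_one_one]
  refine and_congr_left fun _ => ?_
  constructor <;> intro h <;> linear_combination -h

lemma cons_mem_Br_iff {s : k} (hs : s ≠ 0) (β : k) (w : List k) :
    β :: w ∈ Br s ↔ w ∈ Br (β - s⁻¹) := by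
  simp only [Br, Set.mem_ofPred_eq, piWord_cons_zero_one, piWord_cons_one_one]
  set b := piWord w 0 1
  set d := piWord w 1 1
  constructor
  · rintro ⟨hd, hne⟩
    have hcol : -b + β * d = s⁻¹ * d := (eq_inv_mul_iff_mul_eq₀ hs).mpr hd.symm
    refine ⟨by linear_combination -hcol, fun hd0 => hne ?_⟩
    rw [hcol, hd0, mul_zero]
  · rintro ⟨hb, hd⟩
    have hcol : -b + β * d = s⁻¹ * d := by linear_combination -hb
    refine ⟨?_, hcol ▸ mul_ne_zero (inv_ne_zero hs) hd⟩
    rw [hcol, ← mul_assoc, mul_inv_cancel₀ hs, one_mul]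

end

theorem stmt6_general {k : Type*} [Field k] (r : k) (x : List k) (α β : k)
    (hα : α ≠ r) (γ : k) (hγ : γ = (r ^ 2 - (α - β) * r + 1 - α * β) * (r - α)⁻¹) :
    α :: β :: x ∈ Ar r ↔ γ :: x ∈ Ar r := by
  have hαr : α - r ≠ 0 := sub_ne_zero.mpr hα
  have hγr : γ - r = β - (α - r)⁻¹ := by
    rw [hγ]
    field_simp [sub_ne_zero.mpr hα.symm]
    ring
  rw [cons_mem_Ar_iff, cons_mem_Br_iff hαr, cons_mem_Ar_iff, hγr]

theorem stmt6 {k : Type*} [Field k] [Fintype k] (r : k) (x : List k) (α β : k)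
    (hα : α ≠ r) (γ : k) (hγ : γ = (r ^ 2 - (α - β) * r + 1 - α * β) * (r - α)⁻¹) :
    α :: β :: x ∈ Ar r ↔ γ :: x ∈ Ar r :=
  stmt6_general r x α β hα γ hγ
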